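/- The kernel of the group homomorphism σ : GL₂(ℂ) → GL₃(ℂ) is exactly {I, −I}, the cyclic group of order two: σ(A) is the 3×3 identity matrix if and only if A = I or A = −I. -/
import Mathlib


open Matrix
open scoped MatrixGroups

noncomputable section

/-- The map `σ : GL₂(ℂ) → GL₃(ℂ)` (given here on the underlying matrices), defined on
`A = [[a,b],[c,d]]` by the explicit formula of the banana monodromy analysis. -/
def sigmaMat (A : Matrix (Fin 2) (Fin 2) ℂ) : Matrix (Fin 3) (Fin 3) ℂ :=
  let a := A 0 0
  let b := A 0 1
  let c := A 1 0
  let d := A 1 1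
  (3 : ℂ)⁻¹ •
    !![(a + c) * (3 * a + c),
        2 * Complex.I * (6 * a ^ 2 - 9 * a * b + 8 * a * c - 6 * a * d - 6 * b * c
          + 2 * c ^ 2 - 3 * c * d),
        -3 * (3 * a - 3 * b + c - d) * (a - b + c - d);
      Complex.I * c * (a + c),
        -4 * a * c + 3 * a * d + 3 * b * c - 4 * c ^ 2 + 6 * c * d,
        -3 * Complex.I * (c - d) * (a - b + c - d);
      -c ^ 2,
        -2 * Complex.I * c * (2 * c - 3 * d),
        3 * (c - d) ^ 2]

/-- The kernel of the homomorphism `σ : GL₂(ℂ) → GL₃(ℂ)` is exactly `{I, -I}`: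
`σ(A) = 1` if and only if `A = I` or `A = -I`. -/
theorem sigmaMat_kernel (A : GL (Fin 2) ℂ) :
    sigmaMat (A : Matrix (Fin 2) (Fin 2) ℂ) = 1 ↔
      (A : Matrix (Fin 2) (Fin 2) ℂ) = 1 ∨ (A : Matrix (Fin 2) (Fin 2) ℂ) = -1 := by
  constructor
  · intro h
    have h20 := congrFun (congrFun h 2) 0
    have h00 := congrFun (congrFun h 0) 0
    have h11 := congrFun (congrFun h 1) 1
    have h01 := congrFun (congrFun h 0) 1
    simp [sigmaMat, Matrix.one_apply] at h20 h00 h11 h01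
    rw [h20] at h00 h11 h01
    field_simp at h00 h11
    have ha2 : (A : Matrix (Fin 2) (Fin 2) ℂ) 0 0 ^ 2 = 1 := by
      linear_combination (3:ℂ)⁻¹ * h00
    have ha0 : (A : Matrix (Fin 2) (Fin 2) ℂ) 0 0 ≠ 0 := by
      intro h0; rw [h0] at ha2; simp at ha2
    have hd : (A : Matrix (Fin 2) (Fin 2) ℂ) 1 1 = (A : Matrix (Fin 2) (Fin 2) ℂ) 0 0 := by
      linear_combination (3:ℂ)⁻¹ * (A : Matrix (Fin 2) (Fin 2) ℂ) 0 0 * h11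
        - (A : Matrix (Fin 2) (Fin 2) ℂ) 1 1 * ha2
    have hb : (A : Matrix (Fin 2) (Fin 2) ℂ) 0 1 = 0 := by
      rw [hd] at h01
      have hab : (A : Matrix (Fin 2) (Fin 2) ℂ) 0 0 * (A : Matrix (Fin 2) (Fin 2) ℂ) 0 1 = 0 := by
        linear_combination (-(9:ℂ))⁻¹ * h01
      rcases mul_eq_zero.mp hab with h' | h'
      · exact absurd h' ha0
      · exact h'
    have hfac : ((A : Matrix (Fin 2) (Fin 2) ℂ) 0 0 - 1) * ((A : Matrix (Fin 2) (Fin 2) ℂ) 0 0 + 1) = 0 := by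
      linear_combination ha2
    rcases mul_eq_zero.mp hfac with h' | h'
    · left
      have ha : (A : Matrix (Fin 2) (Fin 2) ℂ) 0 0 = 1 := by linear_combination h'
      ext i j; fin_cases i <;> fin_cases j <;>
        simp [ha, hb, h20, hd, Matrix.one_apply]
    · right
      have ha : (A : Matrix (Fin 2) (Fin 2) ℂ) 0 0 = -1 := by linear_combination h'
      ext i j; fin_cases i <;> fin_cases j <;>
        simp [ha, hb, h20, hd, Matrix.one_apply]
  · rintro (h | h) <;> · rw [h]; ext i j; fin_cases i <;> fin_cases j <;>
      simp [sigmaMat, Matrix.one_apply, Matrix.vecHead, Matrix.vecTail]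

end
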